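/- For any pair of probability distributions (P1,P2) on a finite alphabet X: (i) the map α ↦ GJS(P1,P2,α) is nondecreasing on (0,∞); (ii) lim_{α↓0} GJS(P1,P2,α) = 0; and (iii) lim_{α→∞} GJS(P1,P2,α) = D(P2‖P1), where the equality in (iii) is in the extended reals [0,∞] and D denotes the Kullback–Leibler divergence. -/

import Mathlib

open Filter Topology MeasureTheory

namespace Classification

variable {X : Type*} [Fintype X] [DecidableEq X]

/-- `P` is a probability mass function on the finite alphabet `X`. -/
def IsDist (P : X → ℝ) : Prop := (∀ x, 0 ≤ P x) ∧ ∑ x, P x = 1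

/-- `P` has full support. -/
def FullSupport (P : X → ℝ) : Prop := ∀ x, 0 < P x

/-- Empirical distribution (type) of a sequence `x : Fin m → X`. -/
noncomputable def empDist {m : ℕ} (x : Fin m → X) : X → ℝ :=
  fun a => ((Finset.univ.filter fun i => x i = a).card : ℝ) / m

/-- Real-valued KL divergence with the usual `0 · log 0 = 0` convention. -/
noncomputable def klDivR (Q P : X → ℝ) : ℝ := ∑ x, Q x * Real.log (Q x / P x)

open Classical in
/-- Extended-real-valued KL divergence: `⊤` when `Q` is not absolutely continuous w.r.t. `P`. -/
noncomputable def klDivE (Q P : X → ℝ) : EReal :=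
  if ∀ x, P x = 0 → Q x = 0 then ((klDivR Q P : ℝ) : EReal) else ⊤

/-- The mixture `(α P1 + P2) / (1 + α)`. -/
noncomputable def mix (P1 P2 : X → ℝ) (α : ℝ) : X → ℝ :=
  fun x => (α * P1 x + P2 x) / (1 + α)

/-- Generalized Jensen–Shannon divergence
`GJS(P1,P2,α) = α D(P1 ‖ (αP1+P2)/(1+α)) + D(P2 ‖ (αP1+P2)/(1+α))`. -/
noncomputable def GJS (P1 P2 : X → ℝ) (α : ℝ) : ℝ :=
  α * klDivR P1 (mix P1 P2 α) + klDivR P2 (mix P1 P2 α)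

/-- Training sequence length `N = ⌈α n⌉`. -/
noncomputable def trainLen (α : ℝ) (n : ℕ) : ℕ := ⌈α * (n : ℝ)⌉₊

/-- Probability of observing the sequence `x` under i.i.d. sampling from `P`. -/
noncomputable def seqProb (P : X → ℝ) {m : ℕ} (x : Fin m → X) : ℝ := ∏ i, P (x i)

/-- A binary classification test: output `true` means "declare H₂",
`false` means "declare H₁". -/
abbrev BTest (X : Type*) (α : ℝ) (n : ℕ) : Type _ :=
  (Fin (trainLen α n) → X) → (Fin (trainLen α n) → X) → (Fin n → X) → Bool

/-- Type-I error probability: probability of declaring `H₂` when `Y^n ~ P1` (hypothesis H₁). -/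
noncomputable def beta1 {α : ℝ} {n : ℕ} (φ : BTest X α n) (P1 P2 : X → ℝ) : ℝ :=
  ∑ x1 : Fin (trainLen α n) → X, ∑ x2 : Fin (trainLen α n) → X, ∑ y : Fin n → X,
    if φ x1 x2 y = true then seqProb P1 x1 * seqProb P2 x2 * seqProb P1 y else 0

/-- Type-II error probability: probability of declaring `H₁` when `Y^n ~ P2` (hypothesis H₂). -/
noncomputable def beta2 {α : ℝ} {n : ℕ} (φ : BTest X α n) (P1 P2 : X → ℝ) : ℝ :=
  ∑ x1 : Fin (trainLen α n) → X, ∑ x2 : Fin (trainLen α n) → X, ∑ y : Fin n → X,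
    if φ x1 x2 y = false then seqProb P1 x1 * seqProb P2 x2 * seqProb P2 y else 0

open Classical in
/-- Gutman's test with threshold `lam`: declare `H₁` iff `GJS(T̂_{x₁}, T̂_y, α) ≤ lam`. -/
noncomputable def gutman (α lam : ℝ) (n : ℕ) : BTest X α n :=
  fun x1 _ y => if GJS (empDist x1) (empDist y) α ≤ lam then false else true

open Classical in
/-- `- log x` as an extended real, with `⊤` at `x = 0`. -/
noncomputable def negLogE (x : ℝ) : EReal :=
  if x = 0 then ⊤ else ((-Real.log x : ℝ) : EReal)

/-- Gutman's exponent function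
`F(P1,P2,α,lam) = min { α D(Q1‖P1) + D(Q2‖P2) : GJS(Q1,Q2,α) ≤ lam }` (as an inf in `EReal`). -/
noncomputable def Fexp (P1 P2 : X → ℝ) (α lam : ℝ) : EReal :=
  sInf {v : EReal | ∃ Q1 Q2 : X → ℝ, IsDist Q1 ∧ IsDist Q2 ∧ GJS Q1 Q2 α ≤ lam ∧
    v = (α : EReal) * klDivE Q1 P1 + klDivE Q2 P2}

/-- Expectation of `f` under `P`. -/
noncomputable def expect (P : X → ℝ) (f : X → ℝ) : ℝ := ∑ x, P x * f x

/-- Variance of `f` under `P`. -/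
noncomputable def varD (P : X → ℝ) (f : X → ℝ) : ℝ :=
  expect P (fun x => (f x - expect P f) ^ 2)

/-- Information density `ı₁(x) = log((1+α) P1(x) / (α P1(x) + P2(x)))`. -/
noncomputable def iDens1 (P1 P2 : X → ℝ) (α : ℝ) (x : X) : ℝ :=
  Real.log ((1 + α) * P1 x / (α * P1 x + P2 x))

/-- Information density `ı₂(x) = log((1+α) P2(x) / (α P1(x) + P2(x)))`. -/
noncomputable def iDens2 (P1 P2 : X → ℝ) (α : ℝ) (x : X) : ℝ :=
  Real.log ((1 + α) * P2 x / (α * P1 x + P2 x))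

/-- The dispersion `V(P1,P2,α) = α Var_{P1}[ı₁] + Var_{P2}[ı₂]`. -/
noncomputable def disp (P1 P2 : X → ℝ) (α : ℝ) : ℝ :=
  α * varD P1 (iDens1 P1 P2 α) + varD P2 (iDens2 P1 P2 α)

/-- The standard Gaussian cumulative distribution function `Φ`. -/
noncomputable def stdCDF (x : ℝ) : ℝ :=
  (Real.sqrt (2 * Real.pi))⁻¹ * ∫ t in Set.Iic x, Real.exp (-t ^ 2 / 2)

/-- The inverse standard Gaussian cdf `Φ⁻¹`. -/
noncomputable def stdCDFInv (p : ℝ) : ℝ := sInf {x : ℝ | p ≤ stdCDF x}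

/-- The non-asymptotic fundamental limit `λ*(n, α, ε | P1, P2)` for binary classification. -/
noncomputable def lamStar (α : ℝ) (n : ℕ) (ε : ℝ) (P1 P2 : X → ℝ) : ℝ :=
  sSup {lam : ℝ | 0 ≤ lam ∧ ∃ φ : BTest X α n,
    (∀ Q1 Q2 : X → ℝ, IsDist Q1 → IsDist Q2 →
      beta1 φ Q1 Q2 ≤ Real.exp (-((n : ℝ) * lam))) ∧
    beta2 φ P1 P2 ≤ ε}

/-- Rényi divergence of order `γ`. -/
noncomputable def renyi (γ : ℝ) (P1 P2 : X → ℝ) : ℝ :=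
  (1 / (γ - 1)) * Real.log (∑ x, P1 x ^ γ * P2 x ^ (1 - γ))

/-- The fundamental limit `τ*(n, α, ε | φ_n^Gut, P1, P2)` in the dual setting for Gutman's test. -/
noncomputable def tauStarGut (α : ℝ) (n : ℕ) (ε : ℝ) (P1 P2 : X → ℝ) : ℝ :=
  sSup {τ : ℝ | 0 ≤ τ ∧ ∃ lam : ℝ, 0 ≤ lam ∧
    (∀ Q1 Q2 : X → ℝ, IsDist Q1 → IsDist Q2 →
      beta1 (gutman α lam n) Q1 Q2 ≤ ε) ∧
    beta2 (gutman α lam n) P1 P2 ≤ Real.exp (-((n : ℝ) * τ))}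

/-- A two-sample homogeneity test: `true` means "declare H₂" (different distributions). -/
abbrev TTest (X : Type*) (α : ℝ) (n : ℕ) : Type _ :=
  (Fin (trainLen α n) → X) → (Fin n → X) → Bool

/-- False-alarm probability of a two-sample test. -/
noncomputable def betaFA {α : ℝ} {n : ℕ} (φ : TTest X α n) (P1 : X → ℝ) : ℝ :=
  ∑ x : Fin (trainLen α n) → X, ∑ y : Fin n → X,
    if φ x y = true then seqProb P1 x * seqProb P1 y else 0

/-- Miss-detection probability of a two-sample test. -/
noncomputable def betaMD {α : ℝ} {n : ℕ} (φ : TTest X α n) (P1 P2 : X → ℝ) : ℝ :=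
  ∑ x : Fin (trainLen α n) → X, ∑ y : Fin n → X,
    if φ x y = false then seqProb P1 x * seqProb P2 y else 0

/-- The fundamental limit `ξ*(n, α, ε | P1, P2)` for two-sample homogeneity testing. -/
noncomputable def xiStar (α : ℝ) (n : ℕ) (ε : ℝ) (P1 P2 : X → ℝ) : ℝ :=
  sSup {lam : ℝ | 0 ≤ lam ∧ ∃ φ : TTest X α n,
    (∀ Q1 : X → ℝ, IsDist Q1 → betaFA φ Q1 ≤ Real.exp (-((n : ℝ) * lam))) ∧
    betaMD φ P1 P2 ≤ ε}

/-- An M-ary classification test with the rejection option: `some j` means "declare H_j",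
`none` means "reject". -/
abbrev MTest (X : Type*) (M : ℕ) (α : ℝ) (n : ℕ) : Type _ :=
  (Fin M → Fin (trainLen α n) → X) → (Fin n → X) → Option (Fin M)

/-- Type-`j` error probability: probability of declaring some hypothesis other than
`H_j` or rejection, under `H_j`. -/
noncomputable def betaM {M : ℕ} {α : ℝ} {n : ℕ} (ψ : MTest X M α n)
    (P : Fin M → X → ℝ) (j : Fin M) : ℝ :=
  ∑ xs : Fin M → Fin (trainLen α n) → X, ∑ y : Fin n → X,
    if ψ xs y ≠ some j ∧ ψ xs y ≠ none then
      (∏ i, seqProb (P i) (xs i)) * seqProb (P j) y else 0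

/-- Type-`j` rejection probability: probability of rejecting under `H_j`. -/
noncomputable def zetaM {M : ℕ} {α : ℝ} {n : ℕ} (ψ : MTest X M α n)
    (P : Fin M → X → ℝ) (j : Fin M) : ℝ :=
  ∑ xs : Fin M → Fin (trainLen α n) → X, ∑ y : Fin n → X,
    if ψ xs y = none then (∏ i, seqProb (P i) (xs i)) * seqProb (P j) y else 0

/-- The fundamental limit `λ*(n, α, ε | P)` for M-ary classification with rejection. -/
noncomputable def lamStarM (M : ℕ) (α : ℝ) (n : ℕ) (ε : Fin M → ℝ)
    (P : Fin M → X → ℝ) : ℝ :=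
  sSup {lam : ℝ | 0 ≤ lam ∧ ∃ ψ : MTest X M α n,
    (∀ Q : Fin M → X → ℝ, (∀ i, IsDist (Q i)) → ∀ j,
      betaM ψ Q j ≤ Real.exp (-((n : ℝ) * lam))) ∧
    (∀ j, zetaM ψ P j ≤ ε j)}

open Classical in
/-- Gutman's M-ary test with rejection and threshold `lam`. -/
noncomputable def gutmanM (M : ℕ) [NeZero M] (α lam : ℝ) (n : ℕ) : MTest X M α n :=
  fun xs y =>
    if ∃ i k : Fin M, i ≠ k ∧ GJS (empDist (xs i)) (empDist y) α ≤ lam ∧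
        GJS (empDist (xs k)) (empDist y) α ≤ lam then none
    else if h : ∃ j : Fin M, GJS (empDist (xs j)) (empDist y) α ≤ lam then some h.choose
    else some 0

/-- The fundamental limit `τ*(n, α, ε | Ψ_n^Gut, P)` in the dual setting for
Gutman's M-ary test. -/
noncomputable def tauStarGutM (M : ℕ) [NeZero M] (α : ℝ) (n : ℕ) (ε : ℝ)
    (P : Fin M → X → ℝ) : ℝ :=
  sSup {τ : ℝ | 0 ≤ τ ∧ ∃ lam : ℝ, 0 ≤ lam ∧
    (∀ Q : Fin M → X → ℝ, (∀ i, IsDist (Q i)) → ∀ j,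
      betaM (gutmanM M α lam n) Q j ≤ ε) ∧
    (∀ j, zetaM (gutmanM M α lam n) P j ≤ Real.exp (-((n : ℝ) * τ)))}

/-- Generalized divergence of three distributions
`D_γ(P1,P2,P3) = (γ-1)⁻¹ log Σ_x P1(x)^{1-γ} P2(x)^{γ/2} P3(x)^{γ/2}`. -/
noncomputable def genDiv (γ : ℝ) (P1 P2 P3 : X → ℝ) : ℝ :=
  (1 / (γ - 1)) * Real.log (∑ x, P1 x ^ (1 - γ) * P2 x ^ (γ / 2) * P3 x ^ (γ / 2))

/-- A binary classification test with the rejection option: `some 0` means "declare H₁",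
`some 1` means "declare H₂", `none` means "reject". -/
abbrev RTest (X : Type*) (α : ℝ) (n : ℕ) : Type _ :=
  (Fin (trainLen α n) → X) → (Fin (trainLen α n) → X) → (Fin n → X) → Option (Fin 2)

/-- Type-1 error probability of a rejection test: declare `H₂` under `H₁`. -/
noncomputable def beta1R {α : ℝ} {n : ℕ} (ψ : RTest X α n) (P1 P2 : X → ℝ) : ℝ :=
  ∑ x1 : Fin (trainLen α n) → X, ∑ x2 : Fin (trainLen α n) → X, ∑ y : Fin n → X,
    if ψ x1 x2 y = some 1 then seqProb P1 x1 * seqProb P2 x2 * seqProb P1 y else 0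

/-- Type-2 error probability of a rejection test: declare `H₁` under `H₂`. -/
noncomputable def beta2R {α : ℝ} {n : ℕ} (ψ : RTest X α n) (P1 P2 : X → ℝ) : ℝ :=
  ∑ x1 : Fin (trainLen α n) → X, ∑ x2 : Fin (trainLen α n) → X, ∑ y : Fin n → X,
    if ψ x1 x2 y = some 0 then seqProb P1 x1 * seqProb P2 x2 * seqProb P2 y else 0

open Classical in
/-- Type-`j` rejection probability of a binary rejection test. -/
noncomputable def zetaR {α : ℝ} {n : ℕ} (ψ : RTest X α n) (P1 P2 : X → ℝ) (j : Fin 2) : ℝ :=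
  ∑ x1 : Fin (trainLen α n) → X, ∑ x2 : Fin (trainLen α n) → X, ∑ y : Fin n → X,
    if ψ x1 x2 y = none then
      seqProb P1 x1 * seqProb P2 x2 * seqProb (if j = 0 then P1 else P2) y else 0

/-- A binary test is type-based if it depends on the data only through the
triple of empirical distributions. -/
def TypeBasedB {α : ℝ} {n : ℕ} (φ : BTest X α n) : Prop :=
  ∀ x1 x1' x2 x2' : Fin (trainLen α n) → X, ∀ y y' : Fin n → X,
    empDist x1 = empDist x1' → empDist x2 = empDist x2' → empDist y = empDist y' →
      φ x1 x2 y = φ x1' x2' y'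

/-- An M-ary test is type-based if it depends on the data only through the
tuple of empirical distributions. -/
def TypeBasedM {M : ℕ} {α : ℝ} {n : ℕ} (ψ : MTest X M α n) : Prop :=
  ∀ xs xs' : Fin M → Fin (trainLen α n) → X, ∀ y y' : Fin n → X,
    (∀ i, empDist (xs i) = empDist (xs' i)) → empDist y = empDist y' →
      ψ xs y = ψ xs' y'

open Classical in
/-- Probability of an event under hypothesis `H₂` in the binary setup. -/
noncomputable def prH2E (α : ℝ) (n : ℕ) (P1 P2 : X → ℝ)
    (E : (Fin (trainLen α n) → X) → (Fin (trainLen α n) → X) → (Fin n → X) → Prop) : ℝ :=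
  ∑ x1 : Fin (trainLen α n) → X, ∑ x2 : Fin (trainLen α n) → X, ∑ y : Fin n → X,
    if E x1 x2 y then seqProb P1 x1 * seqProb P2 x2 * seqProb P2 y else 0

open Classical in
/-- Probability of an event under hypothesis `H_j` in the M-ary setup. -/
noncomputable def prHjM (M : ℕ) (α : ℝ) (n : ℕ) (P : Fin M → X → ℝ) (j : Fin M)
    (E : (Fin M → Fin (trainLen α n) → X) → (Fin n → X) → Prop) : ℝ :=
  ∑ xs : Fin M → Fin (trainLen α n) → X, ∑ y : Fin n → X,
    if E xs y then (∏ i, seqProb (P i) (xs i)) * seqProb (P j) y else 0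

/-- `η_n(α) = |X| log(n+1)/n + 2|X| log(1+αn)/(αn)`. -/
noncomputable def etaN (X : Type*) [Fintype X] (α : ℝ) (n : ℕ) : ℝ :=
  (Fintype.card X : ℝ) * Real.log ((n : ℝ) + 1) / n +
    2 * (Fintype.card X : ℝ) * Real.log (1 + α * n) / (α * n)

/-- `η_{n,M} = M |X| log(nα+1)/(nα) + |X| log(n+1)/n`. -/
noncomputable def etaNM (X : Type*) [Fintype X] (M : ℕ) (α : ℝ) (n : ℕ) : ℝ :=
  (M : ℝ) * (Fintype.card X : ℝ) * Real.log ((n : ℝ) * α + 1) / ((n : ℝ) * α) +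
    (Fintype.card X : ℝ) * Real.log ((n : ℝ) + 1) / n

/-- `Q` is an `m`-type: the empirical distribution of some sequence of length `m`. -/
def IsTypeDist (m : ℕ) (Q : X → ℝ) : Prop := ∃ x : Fin m → X, empDist x = Q

/-- The type-restricted exponent function `F_n`. -/
noncomputable def Fn (n : ℕ) (P1 P2 : X → ℝ) (α lam : ℝ) : ℝ :=
  sInf {v : ℝ | ∃ Q1 Q2 : X → ℝ, IsTypeDist (trainLen α n) Q1 ∧ IsTypeDist n Q2 ∧
    GJS Q1 Q2 α ≤ lam ∧ v = α * klDivR Q1 P1 + klDivR Q2 P2}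

/-- The second smallest value of a finite family of reals:
`min_{i ≠ j} max (v i) (v j)`. -/
noncomputable def secondMin {M : ℕ} (v : Fin M → ℝ) : ℝ :=
  sInf {t : ℝ | ∃ i j : Fin M, i ≠ j ∧ t = max (v i) (v j)}

/-- The tilted distribution `P^{(γ)}` with `γ = α/(1+α)`. -/
noncomputable def tilt (α : ℝ) (P1 P2 : X → ℝ) : X → ℝ :=
  fun x => P1 x ^ (α / (1 + α)) * P2 x ^ (1 / (1 + α)) /
    ∑ a, P1 a ^ (α / (1 + α)) * P2 a ^ (1 / (1 + α))

end Classification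

/-!
The key is the compensation identity, with `M_a = (a P1 + P2) / (1 + a)`,
`a D(P1‖Q) + D(P2‖Q) = GJS(P1,P2,a) + (1 + a) D(M_a‖Q)`,
which exhibits `GJS(P1,P2,a)` as the minimum over `Q` of `a D(P1‖Q) + D(P2‖Q)`, a minimum of
functions nondecreasing in `a`. Taking `Q = P1` gives `GJS(P1,P2,a) ≤ D(P2‖P1)`, and
`D(P2‖M_a) ≤ GJS(P1,P2,a)` with `M_a → P1` gives the matching lower bound as `a → ∞`.
As `a ↓ 0`, the pointwise bounds `a P1 ≤ (1 + a) M_a` and `P2 ≤ (1 + a) M_a` give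
`GJS(P1,P2,a) ≤ a log ((1 + a) / a) + log (1 + a) → 0`.
-/

namespace Classification

open Real

lemma sub_le_mul_log_div {q m : ℝ} (hq : 0 ≤ q) (hm : 0 ≤ m) (hqm : m = 0 → q = 0) :
    q - m ≤ q * log (q / m) := by
  rcases hq.eq_or_lt with rfl | hq
  · simpa using hm
  have hm : 0 < m := hm.lt_of_ne fun h => hq.ne' (hqm h.symm)
  have := mul_le_mul_of_nonneg_left (one_sub_inv_le_log_of_pos (div_pos hq hm)) hq.le
  rwa [inv_div, mul_sub, mul_one, mul_div_cancel₀ _ hq.ne'] at this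

lemma mul_log_div_eq_add_mul_log_div (p : ℝ) {m r : ℝ} (hm : m ≠ 0) (hr : r ≠ 0) :
    p * log (p / r) = p * log (p / m) + p * log (m / r) := by
  rcases eq_or_ne p 0 with rfl | hp
  · simp
  rw [← mul_add, ← log_mul (div_ne_zero hp hm) (div_ne_zero hm hr), div_mul_div_cancel₀ hm]

variable {X : Type*} {P Q P1 P2 : X → ℝ} {a : ℝ}

lemma mix_eq_zero_iff (h1 : ∀ x, 0 ≤ P1 x) (h2 : ∀ x, 0 ≤ P2 x) (ha : 0 < a) (x : X) :
    mix P1 P2 a x = 0 ↔ P1 x = 0 ∧ P2 x = 0 := by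
  rw [mix, div_eq_zero_iff, or_iff_left (by linarith), add_eq_zero_iff_of_nonneg
    (mul_nonneg ha.le (h1 x)) (h2 x), mul_eq_zero, or_iff_right ha.ne']

lemma tendsto_mix_atTop (P1 P2 : X → ℝ) (x : X) :
    Tendsto (fun α => mix P1 P2 α x) atTop (𝓝 (P1 x)) := by
  have : Tendsto (fun α : ℝ => P1 x + (P2 x - P1 x) / (1 + α)) atTop (𝓝 (P1 x + 0)) :=
    tendsto_const_nhds.add <|
      tendsto_const_nhds.div_atTop (tendsto_atTop_add_const_left _ 1 tendsto_id)
  rw [add_zero] at this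
  refine this.congr' ?_
  filter_upwards [eventually_gt_atTop 0] with α hα
  rw [mix]
  field_simp
  ring

variable [Fintype X]

lemma sum_sub_sum_le_klDivR (hQ : ∀ x, 0 ≤ Q x) (hP : ∀ x, 0 ≤ P x)
    (hQP : ∀ x, P x = 0 → Q x = 0) : ∑ x, Q x - ∑ x, P x ≤ klDivR Q P := by
  rw [← Finset.sum_sub_distrib]
  exact Finset.sum_le_sum fun x _ => sub_le_mul_log_div (hQ x) (hP x) (hQP x)

lemma klDivR_nonneg (hQ : IsDist Q) (hP : IsDist P) (hQP : ∀ x, P x = 0 → Q x = 0) :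
    0 ≤ klDivR Q P := by
  simpa [hQ.2, hP.2] using sum_sub_sum_le_klDivR hQ.1 hP.1 hQP

lemma mul_log_div_sub_sum_le_klDivR (hQ : ∀ x, 0 ≤ Q x) (hP : ∀ x, 0 ≤ P x)
    (hQP : ∀ x, P x = 0 → Q x = 0) (x₀ : X) :
    Q x₀ * log (Q x₀ / P x₀) - ∑ x, P x ≤ klDivR Q P := by
  have hterm : ∀ x, 0 ≤ Q x * log (Q x / P x) + P x := fun x => by
    linarith [sub_le_mul_log_div (hQ x) (hP x) (hQP x), hQ x]
  have := Finset.single_le_sum (fun x _ => hterm x) (Finset.mem_univ x₀)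
  rw [Finset.sum_add_distrib] at this
  rw [klDivR]
  linarith [hP x₀]

lemma klDivR_self (P : X → ℝ) : klDivR P P = 0 := by
  simp [klDivR]

lemma klDivR_le_log_of_le_mul {c : ℝ} (hP : IsDist P) (hc : 0 < c)
    (hPQ : ∀ x, P x ≤ c * Q x) : klDivR P Q ≤ log c := by
  calc klDivR P Q ≤ ∑ x, P x * log c := Finset.sum_le_sum fun x _ => ?_
    _ = log c := by rw [← Finset.sum_mul, hP.2, one_mul]
  rcases (hP.1 x).eq_or_lt with h0 | hpos
  · simp [← h0]
  have hQ : 0 < Q x := pos_of_mul_pos_right (hpos.trans_le (hPQ x)) hc.le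
  gcongr
  exact (div_le_iff₀ hQ).2 (by linarith [hPQ x])

lemma IsDist.mix (h1 : IsDist P1) (h2 : IsDist P2) (ha : 0 ≤ a) : IsDist (mix P1 P2 a) := by
  refine ⟨fun x => div_nonneg (add_nonneg (mul_nonneg ha (h1.1 x)) (h2.1 x)) (by linarith), ?_⟩
  simp only [Classification.mix]
  rw [← Finset.sum_div, Finset.sum_add_distrib, ← Finset.mul_sum, h1.2, h2.2, mul_one,
    add_comm a, div_self (by linarith)]

lemma mul_klDivR_add_klDivR_eq_GJS_add (h1 : ∀ x, 0 ≤ P1 x) (h2 : ∀ x, 0 ≤ P2 x) (ha : 0 < a)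
    (hQ : ∀ x, Q x = 0 → P1 x = 0 ∧ P2 x = 0) :
    a * klDivR P1 Q + klDivR P2 Q = GJS P1 P2 a + (1 + a) * klDivR (mix P1 P2 a) Q := by
  simp only [GJS, klDivR, Finset.mul_sum, ← Finset.sum_add_distrib]
  refine Finset.sum_congr rfl fun x _ => ?_
  by_cases hM : mix P1 P2 a x = 0
  · obtain ⟨e1, e2⟩ := (mix_eq_zero_iff h1 h2 ha x).1 hM
    simp [e1, e2, hM]
  have hQx : Q x ≠ 0 := fun h => hM ((mix_eq_zero_iff h1 h2 ha x).2 (hQ x h))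
  have hmix : (1 + a) * mix P1 P2 a x = a * P1 x + P2 x := by
    rw [mix]
    field_simp
  rw [mul_log_div_eq_add_mul_log_div (P1 x) hM hQx, mul_log_div_eq_add_mul_log_div (P2 x) hM hQx]
  linear_combination (-log (mix P1 P2 a x / Q x)) * hmix

lemma GJS_le_mul_klDivR_add_klDivR (h1 : IsDist P1) (h2 : IsDist P2) (hQ : IsDist Q)
    (ha : 0 < a) (hQ0 : ∀ x, Q x = 0 → P1 x = 0 ∧ P2 x = 0) :
    GJS P1 P2 a ≤ a * klDivR P1 Q + klDivR P2 Q := by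
  rw [mul_klDivR_add_klDivR_eq_GJS_add h1.1 h2.1 ha hQ0, le_add_iff_nonneg_right]
  exact mul_nonneg (by linarith) <| klDivR_nonneg (h1.mix h2 ha.le) hQ
    fun x hx => (mix_eq_zero_iff h1.1 h2.1 ha x).2 (hQ0 x hx)

lemma klDivR_mix_nonneg (h1 : IsDist P1) (h2 : IsDist P2) (ha : 0 < a) :
    0 ≤ klDivR P1 (mix P1 P2 a) ∧ 0 ≤ klDivR P2 (mix P1 P2 a) :=
  ⟨klDivR_nonneg h1 (h1.mix h2 ha.le) fun x hx => ((mix_eq_zero_iff h1.1 h2.1 ha x).1 hx).1,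
    klDivR_nonneg h2 (h1.mix h2 ha.le) fun x hx => ((mix_eq_zero_iff h1.1 h2.1 ha x).1 hx).2⟩

lemma GJS_nonneg (h1 : IsDist P1) (h2 : IsDist P2) (ha : 0 < a) : 0 ≤ GJS P1 P2 a :=
  add_nonneg (mul_nonneg ha.le (klDivR_mix_nonneg h1 h2 ha).1) (klDivR_mix_nonneg h1 h2 ha).2

lemma GJS_monotoneOn (h1 : IsDist P1) (h2 : IsDist P2) : MonotoneOn (GJS P1 P2) (Set.Ioi 0) := by
  intro a (ha : 0 < a) b (hb : 0 < b) hab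
  calc GJS P1 P2 a ≤ a * klDivR P1 (mix P1 P2 b) + klDivR P2 (mix P1 P2 b) :=
        GJS_le_mul_klDivR_add_klDivR h1 h2 (h1.mix h2 hb.le) ha
          fun x => (mix_eq_zero_iff h1.1 h2.1 hb x).1
    _ ≤ b * klDivR P1 (mix P1 P2 b) + klDivR P2 (mix P1 P2 b) := by
        gcongr
        exact (klDivR_mix_nonneg h1 h2 hb).1
    _ = GJS P1 P2 b := rfl

lemma GJS_le_log (h1 : IsDist P1) (h2 : IsDist P2) (ha : 0 < a) :
    GJS P1 P2 a ≤ a * log (1 + a) - a * log a + log (1 + a) := by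
  have hmix : ∀ x, a * P1 x + P2 x = (1 + a) * mix P1 P2 a x := fun x => by
    rw [mix]
    field_simp
  have hD1 : klDivR P1 (mix P1 P2 a) ≤ log ((1 + a) / a) :=
    klDivR_le_log_of_le_mul h1 (by positivity) fun x => by
      rw [div_mul_eq_mul_div, le_div_iff₀ ha, ← hmix]
      nlinarith [h2.1 x]
  have hD2 : klDivR P2 (mix P1 P2 a) ≤ log (1 + a) :=
    klDivR_le_log_of_le_mul h2 (by positivity) fun x => by
      rw [← hmix]
      nlinarith [h1.1 x]
  calc GJS P1 P2 a ≤ a * log ((1 + a) / a) + log (1 + a) := by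
        unfold GJS
        gcongr
    _ = a * log (1 + a) - a * log a + log (1 + a) := by
        rw [log_div (by positivity) ha.ne']
        ring

lemma tendsto_GJS_nhdsGT_zero (h1 : IsDist P1) (h2 : IsDist P2) :
    Tendsto (GJS P1 P2) (𝓝[>] 0) (𝓝 0) := by
  have hbound : Tendsto (fun a => a * log (1 + a) - a * log a + log (1 + a)) (𝓝[>] 0) (𝓝 0) := by
    have : ContinuousAt (fun a => a * log (1 + a) - a * log a + log (1 + a)) 0 := by
      have := continuous_mul_log.continuousAt (x := 0)
      fun_prop (disch := norm_num)
    simpa using this.tendsto.mono_left nhdsWithin_le_nhds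
  refine tendsto_of_tendsto_of_tendsto_of_le_of_le' tendsto_const_nhds hbound ?_ ?_ <;>
    filter_upwards [self_mem_nhdsWithin] with a ha
  exacts [GJS_nonneg h1 h2 ha, GJS_le_log h1 h2 ha]

lemma klDivR_mix_le_GJS (h1 : IsDist P1) (h2 : IsDist P2) (ha : 0 < a) :
    klDivR P2 (mix P1 P2 a) ≤ GJS P1 P2 a :=
  le_add_of_nonneg_left (mul_nonneg ha.le (klDivR_mix_nonneg h1 h2 ha).1)

lemma GJS_le_klDivE (h1 : IsDist P1) (h2 : IsDist P2) (ha : 0 < a) :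
    (GJS P1 P2 a : EReal) ≤ klDivE P2 P1 := by
  unfold klDivE
  split_ifs with h21
  · refine EReal.coe_le_coe_iff.2 ?_
    calc GJS P1 P2 a ≤ a * klDivR P1 P1 + klDivR P2 P1 :=
          GJS_le_mul_klDivR_add_klDivR h1 h2 h1 ha fun x hx => ⟨hx, h21 x hx⟩
      _ = klDivR P2 P1 := by rw [klDivR_self, mul_zero, zero_add]
  · exact le_top

lemma tendsto_klDivR_mix_atTop (h21 : ∀ x, P1 x = 0 → P2 x = 0) :
    Tendsto (fun α => klDivR P2 (mix P1 P2 α)) atTop (𝓝 (klDivR P2 P1)) := by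
  refine tendsto_finsetSum _ fun x _ => ?_
  rcases eq_or_ne (P2 x) 0 with h0 | h0
  · simp [h0]
  have hP1 : P1 x ≠ 0 := fun h => h0 (h21 x h)
  exact ((tendsto_const_nhds.div (tendsto_mix_atTop P1 P2 x) hP1).log
    (div_ne_zero h0 hP1)).const_mul _

lemma tendsto_klDivR_mix_atTop_atTop (h1 : IsDist P1) (h2 : IsDist P2) {x₀ : X}
    (hx₀ : P1 x₀ = 0) (hx₀' : P2 x₀ ≠ 0) :
    Tendsto (fun α => klDivR P2 (mix P1 P2 α)) atTop atTop := by
  have hlow : Tendsto (fun α => P2 x₀ * log (1 + α) - 1) atTop atTop :=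
    tendsto_atTop_add_const_right _ _ <|
      (tendsto_log_atTop.comp (tendsto_atTop_add_const_left _ 1 tendsto_id)).const_mul_atTop
        ((h2.1 x₀).lt_of_ne hx₀'.symm)
  refine tendsto_atTop_mono' _ ?_ hlow
  filter_upwards [eventually_gt_atTop 0] with α hα
  have hM := h1.mix h2 hα.le
  have hM₀ : P2 x₀ / mix P1 P2 α x₀ = 1 + α := by
    rw [mix, hx₀, mul_zero, zero_add]
    field_simp
  have := mul_log_div_sub_sum_le_klDivR h2.1 hM.1
    (fun x hx => ((mix_eq_zero_iff h1.1 h2.1 hα x).1 hx).2) x₀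
  rwa [hM₀, hM.2] at this

lemma tendsto_klDivR_mix_atTop_klDivE (h1 : IsDist P1) (h2 : IsDist P2) :
    Tendsto (fun α => (klDivR P2 (mix P1 P2 α) : EReal)) atTop (𝓝 (klDivE P2 P1)) := by
  unfold klDivE
  split_ifs with h21
  · exact EReal.tendsto_coe.2 (tendsto_klDivR_mix_atTop h21)
  · push Not at h21
    obtain ⟨x₀, hx₀, hx₀'⟩ := h21
    exact EReal.tendsto_coe_atTop.comp (tendsto_klDivR_mix_atTop_atTop h1 h2 hx₀ hx₀')

lemma tendsto_GJS_atTop (h1 : IsDist P1) (h2 : IsDist P2) :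
    Tendsto (fun α => (GJS P1 P2 α : EReal)) atTop (𝓝 (klDivE P2 P1)) := by
  refine tendsto_of_tendsto_of_tendsto_of_le_of_le' (tendsto_klDivR_mix_atTop_klDivE h1 h2)
    tendsto_const_nhds ?_ ?_ <;> filter_upwards [eventually_gt_atTop 0] with α hα
  exacts [EReal.coe_le_coe_iff.2 (klDivR_mix_le_GJS h1 h2 hα), GJS_le_klDivE h1 h2 hα]

theorem GJS_properties_general {X : Type*} [Fintype X]
    (P1 P2 : X → ℝ) (h1 : IsDist P1) (h2 : IsDist P2) :
    (∀ a b : ℝ, 0 < a → a ≤ b → GJS P1 P2 a ≤ GJS P1 P2 b) ∧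
    Filter.Tendsto (fun α : ℝ => GJS P1 P2 α) (nhdsWithin 0 (Set.Ioi 0)) (nhds 0) ∧
    Filter.Tendsto (fun α : ℝ => ((GJS P1 P2 α : ℝ) : EReal)) Filter.atTop
      (nhds (klDivE P2 P1)) :=
  ⟨fun _ _ ha hab => GJS_monotoneOn h1 h2 ha (ha.trans_le hab) hab,
    tendsto_GJS_nhdsGT_zero h1 h2, tendsto_GJS_atTop h1 h2⟩

/-- properties of the generalized Jensen–Shannon divergence:
(i) `α ↦ GJS(P1,P2,α)` is nondecreasing on `(0,∞)`;
(ii) `GJS(P1,P2,α) → 0` as `α ↓ 0`;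
(iii) `GJS(P1,P2,α) → D(P2‖P1)` (in the extended reals) as `α → ∞`. -/
theorem GJS_properties {X : Type*} [Fintype X] [DecidableEq X]
    (P1 P2 : X → ℝ) (h1 : IsDist P1) (h2 : IsDist P2) :
    (∀ a b : ℝ, 0 < a → a ≤ b → GJS P1 P2 a ≤ GJS P1 P2 b) ∧
    Filter.Tendsto (fun α : ℝ => GJS P1 P2 α) (nhdsWithin 0 (Set.Ioi 0)) (nhds 0) ∧
    Filter.Tendsto (fun α : ℝ => ((GJS P1 P2 α : ℝ) : EReal)) Filter.atTop
      (nhds (klDivE P2 P1)) :=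
  GJS_properties_general P1 P2 h1 h2

end Classification
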